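/- arXiv:1111.3747 — 2 statements merged into one kernel-verified Lean document; each statement's English description precedes it below -/
import Mathlib

section
/- Let L be a link with maximal Euler characteristic χ(L) and density d(L) > 0. Choose N ∈ ℕ with N ≥ |χ(L)| and N > 3/d(L). Then for any bipartite graph representative Γ ⊆ K_{p,q} of L with p, q ≥ N, one has d(Γ) = 1/q + 1/p + (−χ(L))/(pq) ≤ 3/N < d(L). In particular, the supremum defining d(L) is attained by a graph with p, q ≤ N, i.e. it is a maximum. -/
/-- If `χ ≤ 0`, `N ≥ |χ|`, `N ≥ 1` and `p, q ≥ N`, then the density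
`(p + q - χ)/(pq)` equals `1/q + 1/p + (-χ)/(pq)` and is at most `3/N`;
so if moreover `3/N < D` (with `D = d(L)`), it is strictly less than `D`. -/
theorem stmt_6 (p q N : ℕ) (χ : ℤ) (D : ℝ) (hN : 1 ≤ N) (hχ : χ ≤ 0)
    (hNχ : (χ.natAbs : ℕ) ≤ N) (hp : N ≤ p) (hq : N ≤ q) (hD : 3 / (N : ℝ) < D) :
    ((p : ℝ) + q - χ) / (p * q) = 1 / q + 1 / p + (-(χ : ℝ)) / (p * q) ∧
    ((p : ℝ) + q - χ) / (p * q) ≤ 3 / N ∧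
    ((p : ℝ) + q - χ) / (p * q) < D := by
  have hNp : (0:ℝ) < N := by exact_mod_cast hN
  have hpp : (0:ℝ) < p := lt_of_lt_of_le hNp (by exact_mod_cast hp)
  have hqq : (0:ℝ) < q := lt_of_lt_of_le hNp (by exact_mod_cast hq)
  have hpr : (N:ℝ) ≤ p := by exact_mod_cast hp
  have hqr : (N:ℝ) ≤ q := by exact_mod_cast hq
  have heq : ((p : ℝ) + q - χ) / (p * q) = 1 / q + 1 / p + (-(χ : ℝ)) / (p * q) := by
    field_simp
    ring
  have hle : ((p : ℝ) + q - χ) / (p * q) ≤ 3 / N := by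
    rw [heq]
    have h1 : (1:ℝ)/q ≤ 1/N := one_div_le_one_div_of_le hNp hqr
    have h2 : (1:ℝ)/p ≤ 1/N := one_div_le_one_div_of_le hNp hpr
    have hχN : (-(χ:ℝ)) ≤ N := by
      have h : (χ.natAbs : ℝ) ≤ N := by exact_mod_cast hNχ
      have habs : |(χ:ℝ)| ≤ N := by rwa [← Int.cast_abs, Int.abs_eq_natAbs, Int.cast_natCast]
      linarith [(abs_le.mp habs).1]
    have h3 : (-(χ:ℝ)) / (p * q) ≤ 1/N := by
      rw [div_le_div_iff₀ (by positivity) hNp]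
      nlinarith
    have h4 : (3:ℝ)/N = 1/N + 1/N + 1/N := by ring
    linarith
  exact ⟨heq, hle, hle.trans_lt hD⟩
end

section
/- Let Γ be a bipartite graph with parts P (|P| = p) and Q (|Q| = q), where p, q ≥ 6, such that no 3-element subset of P together with a 6-element subset of Q (nor a 6-element subset of P with a 3-element subset of Q) spans a complete bipartite subgraph K_{3,6}. Then e(Γ)/(pq) ≤ 17/18. -/
/-!
Double count the pairs (box, non-edge) where a box is a product `S × T` of a 3-set and a 6-set
containing the non-edge. Every box contains a non-edge, and a fixed non-edge lies in
`C(p-1,2) C(q-1,5)` boxes, so `C(p,3) C(q,6) ≤ #non-edges · C(p-1,2) C(q-1,5)`,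
i.e. `p q ≤ 18 · #non-edges`.
-/

open Finset

lemma Nat.mul_choose_sub_one {n k : ℕ} (hn : 1 ≤ n) (hk : 1 ≤ k) :
    n * (n - 1).choose (k - 1) = k * n.choose k := by
  obtain ⟨n, rfl⟩ := Nat.exists_eq_add_of_le' hn
  obtain ⟨k, rfl⟩ := Nat.exists_eq_add_of_le' hk
  rw [Nat.add_sub_cancel, Nat.add_sub_cancel, Nat.add_one_mul_choose_eq, mul_comm]

lemma Finset.card_powersetCard_univ_filter_mem {α : Type*} [Fintype α] [DecidableEq α]
    (a : α) {k : ℕ} (hk : 1 ≤ k) :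
    #{S ∈ univ.powersetCard k | a ∈ S} = (Fintype.card α - 1).choose (k - 1) := by
  simpa only [singleton_subset_iff, card_singleton, card_univ] using
    card_filter_powersetCard_subset {a} univ k (subset_univ _) hk

def Finset.BoxFree {α β : Type*} (E : Finset (α × β)) (s t : ℕ) : Prop :=
  ∀ (S : Finset α) (T : Finset β), #S = s → #T = t → ¬ ∀ u ∈ S, ∀ v ∈ T, (u, v) ∈ E

theorem Finset.BoxFree.card_mul_card_le {α β : Type*} [Fintype α] [Fintype β]
    [DecidableEq α] [DecidableEq β] {E : Finset (α × β)} {s t : ℕ} (hE : E.BoxFree s t)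
    (hs : 1 ≤ s) (hsα : s ≤ Fintype.card α) (ht : 1 ≤ t) (htβ : t ≤ Fintype.card β) :
    Fintype.card α * Fintype.card β ≤ s * t * #Eᶜ := by
  set a := Fintype.card α
  set b := Fintype.card β
  let boxes : Finset (Finset α × Finset β) := univ.powersetCard s ×ˢ univ.powersetCard t
  let contains (B : Finset α × Finset β) (x : α × β) : Prop := x.1 ∈ B.1 ∧ x.2 ∈ B.2
  have hdouble : #boxes * 1 ≤ #Eᶜ * ((a - 1).choose (s - 1) * (b - 1).choose (t - 1)) := by
    refine card_mul_le_card_mul contains (fun B hB ↦ ?_) (fun x _ ↦ le_of_eq ?_)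
    · rw [mem_product, mem_powersetCard_univ, mem_powersetCard_univ] at hB
      have hmiss := hE B.1 B.2 hB.1 hB.2
      push Not at hmiss
      obtain ⟨u, hu, v, hv, huv⟩ := hmiss
      exact card_pos.mpr ⟨(u, v), (mem_bipartiteAbove contains).mpr ⟨mem_compl.mpr huv, hu, hv⟩⟩
    · rw [bipartiteBelow, filter_product (p := (x.1 ∈ ·)) (q := (x.2 ∈ ·)), card_product,
        card_powersetCard_univ_filter_mem x.1 hs, card_powersetCard_univ_filter_mem x.2 ht]
  have hboxes : #boxes = a.choose s * b.choose t := by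
    simp only [boxes, card_product, card_powersetCard, card_univ, a, b]
  have hchoose_pos : 0 < (a - 1).choose (s - 1) * (b - 1).choose (t - 1) :=
    Nat.mul_pos (Nat.choose_pos (by omega)) (Nat.choose_pos (by omega))
  refine Nat.le_of_mul_le_mul_right ?_ hchoose_pos
  calc a * b * ((a - 1).choose (s - 1) * (b - 1).choose (t - 1))
      = (a * (a - 1).choose (s - 1)) * (b * (b - 1).choose (t - 1)) := by ring
    _ = s * t * #boxes := by
      rw [Nat.mul_choose_sub_one (by omega) hs, Nat.mul_choose_sub_one (by omega) ht, hboxes]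
      ring
    _ ≤ s * t * (#Eᶜ * ((a - 1).choose (s - 1) * (b - 1).choose (t - 1))) := by
      rw [← mul_one #boxes]; exact Nat.mul_le_mul_left _ hdouble
    _ = _ := by ring

theorem stmt_8_general (p q : ℕ) (hp : 6 ≤ p) (hq : 6 ≤ q)
    (E : Finset (Fin p × Fin q))
    (h36 : ∀ (S : Finset (Fin p)) (T : Finset (Fin q)), S.card = 3 → T.card = 6 →
      ¬ (∀ u ∈ S, ∀ v ∈ T, (u, v) ∈ E)) :
    (E.card : ℝ) / (p * q) ≤ 17 / 18 := by
  have hbound := BoxFree.card_mul_card_le h36 (by norm_num) (by simp only [Fintype.card_fin]; omega)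
    (by norm_num) (by simpa only [Fintype.card_fin] using hq)
  rw [card_compl, Fintype.card_prod] at hbound
  simp only [Fintype.card_fin] at hbound
  have hE : #E ≤ p * q := by simpa using card_le_univ E
  have hpq : (0 : ℝ) < p * q := by positivity
  rw [div_le_div_iff₀ hpq (by norm_num)]
  exact_mod_cast (by omega : #E * 18 ≤ 17 * (p * q))

/-- Extremal counting fact: if a bipartite graph `Γ ⊆ K_{p,q}` (`p, q ≥ 6`)
contains no complete bipartite subgraph `K_{3,6}` in either orientation, then
its edge density is at most `17/18`. -/
theorem stmt_8 (p q : ℕ) (hp : 6 ≤ p) (hq : 6 ≤ q)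
    (E : Finset (Fin p × Fin q))
    (h36 : ∀ (S : Finset (Fin p)) (T : Finset (Fin q)), S.card = 3 → T.card = 6 →
      ¬ (∀ u ∈ S, ∀ v ∈ T, (u, v) ∈ E))
    (h63 : ∀ (S : Finset (Fin p)) (T : Finset (Fin q)), S.card = 6 → T.card = 3 →
      ¬ (∀ u ∈ S, ∀ v ∈ T, (u, v) ∈ E)) :
    (E.card : ℝ) / (p * q) ≤ 17 / 18 :=
  stmt_8_general p q hp hq E h36
end
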